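/- arXiv:0706.4045 — 3 statements merged into one kernel-verified Lean document; each statement's English description precedes it below -/
import Mathlib

section
/- Let Ω be a bounded open subset of ℝ^N (N ≥ 3) and let q : closure(Ω) → ℝ be continuous with q⁻ := min_{closure(Ω)} q > 1, and set q⁺ := max_{closure(Ω)} q. Then there exists a constant μ > 0 such that for every function u : ℝ^N → ℝ of class C¹ with compact support contained in Ω, ∫_Ω (|Du(x)|^{q⁺} + |Du(x)|^{q⁻}) dx ≥ μ ∫_Ω |u(x)|^{q(x)} dx. -/
/-! On `Ω` we have `q⁻ ≤ q ≤ q⁺`, so pointwise `|u|^q ≤ |u|^{q⁻} + |u|^{q⁺}`, and it suffices to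
have, for each exponent `r ≥ 1`, a Poincaré inequality `∫ |u|^r ≤ D ∫ |Du|^r` for `C¹` functions
supported in the bounded set `Ω`. That follows from the Gagliardo–Nirenberg–Sobolev inequality
`‖u‖_r ≤ C ‖Du‖_p` for some `1 ≤ p ≤ r` with `p < N` and `1/p - 1/N ≤ 1/r`, followed by Hölder's
inequality `‖Du‖_p ≤ |Ω|^{1/p - 1/r} ‖Du‖_r` on `Ω`. -/

open MeasureTheory ENNReal NNReal Module Bornology

lemma ENNReal.rpow_le_rpow_add_rpow (a : ℝ≥0∞) {s t r : ℝ} (hst : s ≤ t) (htr : t ≤ r) :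
    a ^ t ≤ a ^ s + a ^ r := by
  rcases le_total a 1 with ha | ha
  · exact (rpow_le_rpow_of_exponent_ge ha hst).trans le_self_add
  · exact (rpow_le_rpow_of_exponent_le ha htr).trans le_add_self

lemma ENNReal.ofReal_norm_rpow {F : Type*} [SeminormedAddGroup F] (y : F) {t : ℝ} (ht : 0 ≤ t) :
    ENNReal.ofReal (‖y‖ ^ t) = ‖y‖ₑ ^ t := by
  rw [← ENNReal.ofReal_rpow_of_nonneg (norm_nonneg y) ht, ofReal_norm]

lemma exists_sobolev_exponent_le {n : ℕ} (hn : 1 < n) {r : ℝ≥0} (hr : 1 ≤ r) :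
    ∃ p : ℝ≥0, 1 ≤ p ∧ p < n ∧ p ≤ r ∧ (p : ℝ)⁻¹ - (n : ℝ)⁻¹ ≤ (r : ℝ)⁻¹ := by
  have hn0 : (0 : ℝ≥0) < n := by positivity
  have hr0 : (0 : ℝ≥0) < r := one_pos.trans_le hr
  -- the Sobolev exponent `s`, `1 / s = 1 / r + 1 / n`, would do, except that it may be `< 1`
  set s : ℝ≥0 := (r⁻¹ + (n : ℝ≥0)⁻¹)⁻¹
  have hs0 : 0 < s := by positivity
  refine ⟨max 1 s, le_max_left _ _, max_lt (by exact_mod_cast hn) ?_, max_le hr ?_, ?_⟩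
  · exact inv_lt_of_inv_lt₀ hn0 (lt_add_of_pos_left _ (by positivity))
  · exact inv_le_of_inv_le₀ hr0 (le_add_of_nonneg_right zero_le)
  · have hs : ((max 1 s : ℝ≥0) : ℝ)⁻¹ ≤ (r : ℝ)⁻¹ + (n : ℝ)⁻¹ := by
      calc ((max 1 s : ℝ≥0) : ℝ)⁻¹ ≤ (s : ℝ)⁻¹ :=
            inv_anti₀ (by exact_mod_cast hs0) (by exact_mod_cast le_max_right 1 s)
        _ = (r : ℝ)⁻¹ + (n : ℝ)⁻¹ := by simp [s]
    linarith

lemma lintegral_enorm_rpow_le_of_eLpNorm_le {α ε ε' : Type*} [MeasurableSpace α] {μ : Measure α}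
    [ENorm ε] [ENorm ε'] {f : α → ε} {g : α → ε'} {r C : ℝ≥0} (hr : r ≠ 0)
    (h : eLpNorm f r μ ≤ C * eLpNorm g r μ) :
    ∫⁻ x, ‖f x‖ₑ ^ (r : ℝ) ∂μ ≤ (C ^ (r : ℝ) : ℝ≥0) * ∫⁻ x, ‖g x‖ₑ ^ (r : ℝ) ∂μ := by
  rw [← eLpNorm_nnreal_pow_eq_lintegral hr, ← eLpNorm_nnreal_pow_eq_lintegral hr,
    coe_rpow_of_nonneg _ r.coe_nonneg, ← mul_rpow_of_nonneg _ _ r.coe_nonneg]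
  gcongr

section Poincare

variable {E F : Type*} [NormedAddCommGroup E] [NormedSpace ℝ E] [MeasurableSpace E] [BorelSpace E]
  [FiniteDimensional ℝ E] [NormedAddCommGroup F] [NormedSpace ℝ F] [FiniteDimensional ℝ F]
  (μ : Measure E) [μ.IsAddHaarMeasure]

theorem exists_eLpNorm_le_mul_eLpNorm_fderiv {s : Set E} (hs : IsBounded s)
    (hE : 1 < finrank ℝ E) {r : ℝ≥0} (hr : 1 ≤ r) :
    ∃ C : ℝ≥0, ∀ u : E → F, ContDiff ℝ 1 u → tsupport u ⊆ s →
      eLpNorm u r μ ≤ C * eLpNorm (fderiv ℝ u) r μ := by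
  obtain ⟨p, hp1, hpE, hpr, hpq⟩ := exists_sobolev_exponent_le hE hr
  set e : ℝ := 1 / p - 1 / r
  have he : 0 ≤ e := sub_nonneg.2 (one_div_le_one_div_of_le (by positivity) hpr)
  refine ⟨eLpNormLESNormFDerivOfLeConst F μ s p r * (μ s).toNNReal ^ e, fun u hu hus ↦ ?_⟩
  have hDu : (fderiv ℝ u).support ⊆ s := (support_fderiv_subset ℝ).trans hus
  have holder : eLpNorm (fderiv ℝ u) p μ ≤ eLpNorm (fderiv ℝ u) r μ * μ s ^ e := by
    have := eLpNorm_le_eLpNorm_mul_rpow_measure_univ (μ := μ.restrict s)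
      (coe_le_coe.2 hpr) (hu.continuous_fderiv one_ne_zero).aestronglyMeasurable
    rwa [Measure.restrict_apply_univ, coe_toReal, coe_toReal,
      eLpNorm_restrict_eq_of_support_subset (ε := E →L[ℝ] F) hDu,
      eLpNorm_restrict_eq_of_support_subset (ε := E →L[ℝ] F) hDu] at this
  calc eLpNorm u r μ
      ≤ eLpNormLESNormFDerivOfLeConst F μ s p r * eLpNorm (fderiv ℝ u) p μ :=
        eLpNorm_le_eLpNorm_fderiv_of_le μ hu ((subset_tsupport u).trans hus) hp1
          (by exact_mod_cast hpE) (by simpa using hpq) hs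
    _ ≤ eLpNormLESNormFDerivOfLeConst F μ s p r * (eLpNorm (fderiv ℝ u) r μ * μ s ^ e) := by
        gcongr
    _ = _ := by
        rw [coe_mul, coe_rpow_of_nonneg _ he, coe_toNNReal hs.measure_lt_top.ne]
        ring

theorem exists_lintegral_enorm_rpow_le_lintegral_fderiv {s : Set E} (hs : IsBounded s)
    (hE : 1 < finrank ℝ E) {r : ℝ} (hr : 1 ≤ r) :
    ∃ D : ℝ≥0, ∀ u : E → F, ContDiff ℝ 1 u → tsupport u ⊆ s →
      ∫⁻ x, ‖u x‖ₑ ^ r ∂μ ≤ D * ∫⁻ x, ‖fderiv ℝ u x‖ₑ ^ r ∂μ := by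
  lift r to ℝ≥0 using zero_le_one.trans hr
  obtain ⟨C, hC⟩ := exists_eLpNorm_le_mul_eLpNorm_fderiv (F := F) μ hs hE (r := r)
    (by exact_mod_cast hr)
  exact ⟨C ^ (r : ℝ), fun u hu hus ↦ lintegral_enorm_rpow_le_of_eLpNorm_le
    (by rintro rfl; norm_num at hr) (hC u hu hus)⟩

end Poincare

lemma setLIntegral_ofReal_abs_rpow_le {α : Type*} [MeasurableSpace α] {μ : Measure α} {s : Set α}
    (hs : MeasurableSet s) {u : α → ℝ} (hu : Measurable u) {q : α → ℝ} {a b : ℝ} (ha : 0 ≤ a)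
    (hq : ∀ x ∈ s, a ≤ q x ∧ q x ≤ b) :
    ∫⁻ x in s, ENNReal.ofReal (|u x| ^ q x) ∂μ ≤ (∫⁻ x, ‖u x‖ₑ ^ a ∂μ) + ∫⁻ x, ‖u x‖ₑ ^ b ∂μ := by
  rw [← lintegral_add_left (hu.enorm.pow_const a)]
  refine (setLIntegral_mono' hs fun x hx ↦ ?_).trans (setLIntegral_le_lintegral _ _)
  rw [← Real.norm_eq_abs, ofReal_norm_rpow _ (ha.trans (hq x hx).1)]
  exact rpow_le_rpow_add_rpow _ (hq x hx).1 (hq x hx).2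

lemma setLIntegral_ofReal_norm_rpow_add_eq {α F : Type*} [MeasurableSpace α] [TopologicalSpace α]
    [OpensMeasurableSpace α] {μ : Measure α} [NormedAddCommGroup F] {f : α → F} (hf : Continuous f)
    {s : Set α} (hfs : f.support ⊆ s) {a b : ℝ} (ha : 0 < a) (hb : 0 < b) :
    ∫⁻ x in s, (ENNReal.ofReal (‖f x‖ ^ a) + ENNReal.ofReal (‖f x‖ ^ b)) ∂μ =
      (∫⁻ x, ‖f x‖ₑ ^ a ∂μ) + ∫⁻ x, ‖f x‖ₑ ^ b ∂μ := by
  simp only [ofReal_norm_rpow _ ha.le, ofReal_norm_rpow _ hb.le]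
  rw [setLIntegral_eq_of_support_subset, lintegral_add_left (hf.enorm.measurable.pow_const a)]
  refine fun x hx ↦ hfs fun h ↦ hx ?_
  simp [h, ha, hb]

lemma ENNReal.ofReal_inv_mul_le_of_le_mul {a b : ℝ≥0∞} {D : ℝ≥0} (hD : 0 < D) (h : a ≤ D * b) :
    ENNReal.ofReal (D : ℝ)⁻¹ * a ≤ b := by
  rw [ofReal_inv_of_pos (by exact_mod_cast hD), ofReal_coe_nnreal]
  exact (ENNReal.inv_mul_le_iff (by exact_mod_cast hD.ne') coe_ne_top).2 h

theorem stmt5_general (N : ℕ) (hN : 3 ≤ N) (Ω : Set (EuclideanSpace ℝ (Fin N)))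
    (hΩo : IsOpen Ω) (hΩb : Bornology.IsBounded Ω)
    (q : EuclideanSpace ℝ (Fin N) → ℝ)
    (qm qp : ℝ) (hqm : IsLeast (q '' closure Ω) qm)
    (hqp : IsGreatest (q '' closure Ω) qp) (hqm1 : 1 < qm) :
    ∃ c : ℝ, 0 < c ∧ ∀ u : EuclideanSpace ℝ (Fin N) → ℝ,
      ContDiff ℝ 1 u → HasCompactSupport u → tsupport u ⊆ Ω →
      ENNReal.ofReal c * ∫⁻ x in Ω, ENNReal.ofReal (|u x| ^ q x) ≤
        ∫⁻ x in Ω, (ENNReal.ofReal (‖fderiv ℝ u x‖ ^ qp) +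
          ENNReal.ofReal (‖fderiv ℝ u x‖ ^ qm)) := by
  have hq : ∀ x ∈ Ω, qm ≤ q x ∧ q x ≤ qp := fun x hx ↦
    ⟨hqm.2 ⟨x, subset_closure hx, rfl⟩, hqp.2 ⟨x, subset_closure hx, rfl⟩⟩
  have hqp1 : 1 ≤ qp := hqm1.le.trans (hqp.2 hqm.1)
  have hdim : 1 < finrank ℝ (EuclideanSpace ℝ (Fin N)) := by rw [finrank_euclideanSpace_fin]; omega
  obtain ⟨Dm, hDm⟩ :=
    exists_lintegral_enorm_rpow_le_lintegral_fderiv (F := ℝ) volume hΩb hdim hqm1.le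
  obtain ⟨Dp, hDp⟩ := exists_lintegral_enorm_rpow_le_lintegral_fderiv (F := ℝ) volume hΩb hdim hqp1
  refine ⟨((Dm + Dp + 1 : ℝ≥0) : ℝ)⁻¹, by positivity, fun u hu _ huΩ ↦ ?_⟩
  rw [setLIntegral_ofReal_norm_rpow_add_eq (hu.continuous_fderiv one_ne_zero)
    ((support_fderiv_subset ℝ).trans huΩ) (by linarith) (by linarith)]
  refine ofReal_inv_mul_le_of_le_mul (by positivity) ?_
  calc ∫⁻ x in Ω, ENNReal.ofReal (|u x| ^ q x)
      ≤ (∫⁻ x, ‖u x‖ₑ ^ qm) + ∫⁻ x, ‖u x‖ₑ ^ qp :=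
        setLIntegral_ofReal_abs_rpow_le (μ := volume) hΩo.measurableSet hu.continuous.measurable
          (by linarith) hq
    _ ≤ (Dm * ∫⁻ x, ‖fderiv ℝ u x‖ₑ ^ qm) + Dp * ∫⁻ x, ‖fderiv ℝ u x‖ₑ ^ qp :=
        add_le_add (hDm u hu huΩ) (hDp u hu huΩ)
    _ ≤ (Dm + Dp + 1 : ℝ≥0) * ((∫⁻ x, ‖fderiv ℝ u x‖ₑ ^ qp) + ∫⁻ x, ‖fderiv ℝ u x‖ₑ ^ qm) := by
        rw [add_comm (∫⁻ x, _ ^ qp), mul_add]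
        gcongr
        exacts [le_add_right le_self_add, le_add_right le_add_self]

/-- If `Ω ⊆ ℝ^N` (`N ≥ 3`) is bounded open and `q` is continuous on `closure Ω` with
    minimum `q⁻ > 1` and maximum `q⁺`, then there is `μ > 0` such that for every `C¹`
    function `u` with compact support contained in `Ω`,
    `∫_Ω (|Du|^{q⁺} + |Du|^{q⁻}) ≥ μ ∫_Ω |u|^{q(x)}`. -/
theorem stmt5 (N : ℕ) (hN : 3 ≤ N) (Ω : Set (EuclideanSpace ℝ (Fin N)))
    (hΩo : IsOpen Ω) (hΩb : Bornology.IsBounded Ω)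
    (q : EuclideanSpace ℝ (Fin N) → ℝ) (hq : ContinuousOn q (closure Ω))
    (qm qp : ℝ) (hqm : IsLeast (q '' closure Ω) qm)
    (hqp : IsGreatest (q '' closure Ω) qp) (hqm1 : 1 < qm) :
    ∃ c : ℝ, 0 < c ∧ ∀ u : EuclideanSpace ℝ (Fin N) → ℝ,
      ContDiff ℝ 1 u → HasCompactSupport u → tsupport u ⊆ Ω →
      ENNReal.ofReal c * ∫⁻ x in Ω, ENNReal.ofReal (|u x| ^ q x) ≤
        ∫⁻ x in Ω, (ENNReal.ofReal (‖fderiv ℝ u x‖ ^ qp) +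
          ENNReal.ofReal (‖fderiv ℝ u x‖ ^ qm)) :=
  stmt5_general N hN Ω hΩo hΩb q qm qp hqm hqp hqm1
end

section
/- Let Ω be a bounded open subset of ℝ^N (N ≥ 3) and let p₁, p₂, q : closure(Ω) → ℝ be continuous functions satisfying 1 < p₂(x) < q⁻ ≤ q⁺ < p₁(x) < N for all x ∈ closure(Ω), where q⁻ = min_{closure(Ω)} q and q⁺ = max_{closure(Ω)} q. Then there exists a constant μ > 0 such that for every function u : ℝ^N → ℝ of class C¹ with compact support contained in Ω, ∫_Ω (|Du(x)|^{p₁(x)} + |Du(x)|^{p₂(x)}) dx ≥ (μ/2) ∫_Ω |u(x)|^{q(x)} dx. In particular λ₀ := inf { (∫_Ω (|Du|^{p₁(x)} + |Du|^{p₂(x)}) dx) / (∫_Ω |u|^{q(x)} dx) : u of class C¹ with compact support contained in Ω, u not identically zero } is strictly positive. -/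
/-!
For `a ≤ s ≤ b` one has `t ^ s ≤ t ^ a + t ^ b`. Taking `a = q⁻`, `b = q⁺` bounds
`∫ |u|^{q(x)}` by `∫ |u|^{q⁻} + ∫ |u|^{q⁺}`, and since `p₂ ≤ q⁻ ≤ q⁺ ≤ p₁` the same
inequality bounds `∫ |Du|^{q^±}` by `J₁(u)`. The two are linked by the
Gagliardo–Nirenberg–Sobolev inequality for the constant exponents `1 ≤ q^± < N` on the
bounded set `Ω`. The infimum of `J₁/I₁` is then at least the same constant, because
`0 < I₁(u) < ∞` for every admissible `u ≠ 0`.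
-/

open MeasureTheory ENNReal

/-- `J₁(u) = ∫_Ω (|Du|^{p₁(x)} + |Du|^{p₂(x)}) dx`. -/
noncomputable def Jone (N : ℕ) (Ω : Set (EuclideanSpace ℝ (Fin N)))
    (p₁ p₂ : EuclideanSpace ℝ (Fin N) → ℝ) (u : EuclideanSpace ℝ (Fin N) → ℝ) : ℝ≥0∞ :=
  ∫⁻ x in Ω, (ENNReal.ofReal (‖fderiv ℝ u x‖ ^ p₁ x) +
    ENNReal.ofReal (‖fderiv ℝ u x‖ ^ p₂ x))

/-- `I₁(u) = ∫_Ω |u|^{q(x)} dx`. -/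
noncomputable def Ione (N : ℕ) (Ω : Set (EuclideanSpace ℝ (Fin N)))
    (q : EuclideanSpace ℝ (Fin N) → ℝ) (u : EuclideanSpace ℝ (Fin N) → ℝ) : ℝ≥0∞ :=
  ∫⁻ x in Ω, ENNReal.ofReal (|u x| ^ q x)

open scoped NNReal

namespace Real

theorem rpow_le_rpow_add_rpow {t a b s : ℝ} (ht : 0 ≤ t) (hs : s ≠ 0) (has : a ≤ s)
    (hsb : s ≤ b) : t ^ s ≤ t ^ a + t ^ b := by
  rcases ht.eq_or_lt with rfl | ht
  · rw [zero_rpow hs]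
    positivity
  rcases le_total t 1 with ht1 | ht1
  · linarith [rpow_le_rpow_of_exponent_ge ht ht1 has, rpow_nonneg ht.le b]
  · linarith [rpow_le_rpow_of_exponent_le ht1 hsb, rpow_nonneg ht.le a]

theorem min_rpow_rpow_le_rpow {t a b s : ℝ} (ht : 0 < t) (has : a ≤ s) (hsb : s ≤ b) :
    min (t ^ a) (t ^ b) ≤ t ^ s := by
  rcases le_total t 1 with ht1 | ht1
  · exact (min_le_right _ _).trans (rpow_le_rpow_of_exponent_ge ht ht1 hsb)
  · exact (min_le_left _ _).trans (rpow_le_rpow_of_exponent_le ht1 has)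

end Real

theorem exists_lintegral_enorm_rpow_le_mul_lintegral_enorm_fderiv_rpow
    {E : Type*} [NormedAddCommGroup E] [NormedSpace ℝ E] [MeasurableSpace E] [BorelSpace E]
    [FiniteDimensional ℝ E] (μ : Measure E) [μ.IsAddHaarMeasure]
    (F : Type*) [NormedAddCommGroup F] [NormedSpace ℝ F] [FiniteDimensional ℝ F]
    {s : Set E} (hs : Bornology.IsBounded s) {p : ℝ} (hp : 1 ≤ p) (hpn : p < Module.finrank ℝ E) :
    ∃ C : ℝ≥0, ∀ u : E → F, ContDiff ℝ 1 u → u.support ⊆ s →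
      ∫⁻ x, ‖u x‖ₑ ^ p ∂μ ≤ C * ∫⁻ x, ‖fderiv ℝ u x‖ₑ ^ p ∂μ := by
  lift p to ℝ≥0 using zero_le_one.trans hp
  norm_cast at hp hpn
  have hp0 : (p : ℝ) ≠ 0 := by positivity
  refine ⟨eLpNormLESNormFDerivOfLeConst F μ s p p ^ (p : ℝ), fun u hu hus => ?_⟩
  have hsob := eLpNorm_le_eLpNorm_fderiv_of_le μ hu hus hp hpn
    (sub_le_self _ (by positivity)) hs
  have hsob_p := ENNReal.rpow_le_rpow hsob p.coe_nonneg
  rwa [eLpNorm_nnreal_eq_lintegral (by positivity), eLpNorm_nnreal_eq_lintegral (by positivity),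
    ENNReal.mul_rpow_of_nonneg _ _ p.coe_nonneg, ← ENNReal.rpow_mul, ← ENNReal.rpow_mul,
    one_div_mul_cancel hp0, ENNReal.rpow_one, ENNReal.rpow_one,
    ← ENNReal.coe_rpow_of_nonneg _ p.coe_nonneg] at hsob_p

section VariableExponent

variable {N : ℕ} {Ω : Set (EuclideanSpace ℝ (Fin N))}
  {p₁ p₂ q u : EuclideanSpace ℝ (Fin N) → ℝ}

theorem lintegral_enorm_fderiv_rpow_le_Jone (hΩ : MeasurableSet Ω) (hu : tsupport u ⊆ Ω)
    {e : ℝ} (he : 0 < e) (hp : ∀ x ∈ Ω, p₂ x ≤ e ∧ e ≤ p₁ x) :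
    ∫⁻ x, ‖fderiv ℝ u x‖ₑ ^ e ≤ Jone N Ω p₁ p₂ u := by
  have hsupp : (Function.support fun x => ‖fderiv ℝ u x‖ₑ ^ e) ⊆ Ω := by
    refine subset_trans (fun x hx => ?_) ((support_fderiv_subset ℝ).trans hu)
    contrapose! hx
    rw [Function.notMem_support] at hx ⊢
    rw [hx, ← ofReal_norm, norm_zero, ENNReal.ofReal_zero, ENNReal.zero_rpow_of_pos he]
  rw [← setLIntegral_eq_of_support_subset hsupp]
  refine setLIntegral_mono' hΩ fun x hx => ?_
  rw [← ofReal_norm, ENNReal.ofReal_rpow_of_nonneg (norm_nonneg _) he.le, add_comm,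
    ← ENNReal.ofReal_add (by positivity) (by positivity)]
  exact ENNReal.ofReal_le_ofReal <|
    Real.rpow_le_rpow_add_rpow (norm_nonneg _) he.ne' (hp x hx).1 (hp x hx).2

theorem Ione_le_lintegral_add (hΩ : MeasurableSet Ω) (hu : Measurable u) {a b : ℝ}
    (ha : 0 < a) (hq : ∀ x ∈ Ω, a ≤ q x ∧ q x ≤ b) :
    Ione N Ω q u ≤ (∫⁻ x, ‖u x‖ₑ ^ a) + ∫⁻ x, ‖u x‖ₑ ^ b := by
  rw [← lintegral_add_left (by fun_prop)]
  refine (setLIntegral_mono' hΩ fun x hx => ?_).trans (setLIntegral_le_lintegral _ _)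
  rw [Real.enorm_eq_ofReal_abs, ENNReal.ofReal_rpow_of_nonneg (abs_nonneg _) ha.le,
    ENNReal.ofReal_rpow_of_nonneg (abs_nonneg _) (ha.le.trans ((hq x hx).1.trans (hq x hx).2)),
    ← ENNReal.ofReal_add (by positivity) (by positivity)]
  obtain ⟨haq, hqb⟩ := hq x hx
  exact ENNReal.ofReal_le_ofReal <|
    Real.rpow_le_rpow_add_rpow (abs_nonneg _) (ha.trans_le haq).ne' haq hqb

theorem Ione_ne_top (hΩ : MeasurableSet Ω) (hu : Continuous u) (hcu : HasCompactSupport u)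
    {a b : ℝ} (ha : 0 < a) (hab : a ≤ b) (hq : ∀ x ∈ Ω, a ≤ q x ∧ q x ≤ b) :
    Ione N Ω q u ≠ ⊤ := by
  have hfin : ∀ e : ℝ, 0 < e → ∫⁻ x, ‖u x‖ₑ ^ e ≠ ⊤ := fun e he => by
    have h := lintegral_rpow_enorm_lt_top_of_eLpNorm_lt_top (by simpa using he) ofReal_ne_top
      (hu.memLp_of_hasCompactSupport hcu (μ := volume)).eLpNorm_lt_top
    rw [ENNReal.toReal_ofReal he.le] at h
    exact h.ne
  exact ne_top_of_le_ne_top (add_ne_top.mpr ⟨hfin a ha, hfin b (ha.trans_le hab)⟩)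
    (Ione_le_lintegral_add hΩ hu.measurable ha hq)

theorem Ione_ne_zero (hΩ : IsOpen Ω) (hu : Continuous u) (hsu : tsupport u ⊆ Ω) (hu0 : u ≠ 0)
    {a b : ℝ} (ha : 0 < a) (hb : 0 < b) (hq : ∀ x ∈ Ω, a ≤ q x ∧ q x ≤ b) :
    Ione N Ω q u ≠ 0 := by
  -- `q` need not be measurable, so compare with a continuous minorant of `|u| ^ q`
  set g := fun x => ENNReal.ofReal (min (|u x| ^ a) (|u x| ^ b))
  have hg : Continuous g := ENNReal.continuous_ofReal.comp <|
    ((Real.continuous_rpow_const ha.le).comp hu.abs).min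
      ((Real.continuous_rpow_const hb.le).comp hu.abs)
  obtain ⟨z, hz⟩ := Function.ne_iff.mp hu0
  have hgz : g z ≠ 0 := by
    have := abs_pos.mpr hz
    simp only [g, ne_eq, ENNReal.ofReal_eq_zero, not_le]
    positivity
  have hpos : 0 < ∫⁻ x in Ω, g x := (setLIntegral_pos_iff hg.measurable).mpr <|
    ((isOpen_compl_singleton.preimage hg).inter hΩ).measure_pos _
      ⟨z, hgz, hsu (subset_tsupport u hz)⟩
  refine (hpos.trans_le (setLIntegral_mono' hΩ.measurableSet fun x hx => ?_)).ne'
  rcases (abs_nonneg (u x)).eq_or_lt with h | h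
  · simp [g, ← h, Real.zero_rpow ha.ne', Real.zero_rpow hb.ne']
  · exact ENNReal.ofReal_le_ofReal (Real.min_rpow_rpow_le_rpow h (hq x hx).1 (hq x hx).2)

theorem exists_mul_Ione_le_Jone (hΩ : MeasurableSet Ω) (hΩb : Bornology.IsBounded Ω)
    {a b : ℝ} (ha : 1 ≤ a) (hab : a ≤ b) (hbN : b < N)
    (hq : ∀ x ∈ Ω, a ≤ q x ∧ q x ≤ b) (hp : ∀ x ∈ Ω, p₂ x ≤ a ∧ b ≤ p₁ x) :
    ∃ c : ℝ≥0, 0 < c ∧ ∀ u, ContDiff ℝ 1 u → tsupport u ⊆ Ω →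
      c * Ione N Ω q u ≤ Jone N Ω p₁ p₂ u := by
  have hrank : (Module.finrank ℝ (EuclideanSpace ℝ (Fin N)) : ℝ) = N := by simp
  obtain ⟨C₁, hC₁⟩ := exists_lintegral_enorm_rpow_le_mul_lintegral_enorm_fderiv_rpow volume ℝ
    hΩb ha (by linarith)
  obtain ⟨C₂, hC₂⟩ := exists_lintegral_enorm_rpow_le_mul_lintegral_enorm_fderiv_rpow volume ℝ
    hΩb (ha.trans hab) (by linarith)
  have hJ : ∀ u, tsupport u ⊆ Ω → ∀ e, a ≤ e → e ≤ b →
      ∫⁻ x, ‖fderiv ℝ u x‖ₑ ^ e ≤ Jone N Ω p₁ p₂ u :=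
    fun u hsu e hae heb => lintegral_enorm_fderiv_rpow_le_Jone hΩ hsu (by linarith)
      fun x hx => ⟨(hp x hx).1.trans hae, heb.trans (hp x hx).2⟩
  refine ⟨(C₁ + C₂ + 1)⁻¹, by positivity, fun u hu hsu => ?_⟩
  have hsupp := (subset_tsupport u).trans hsu
  have hI : Ione N Ω q u ≤ (C₁ + C₂ + 1 : ℝ≥0) * Jone N Ω p₁ p₂ u := calc
    Ione N Ω q u ≤ (∫⁻ x, ‖u x‖ₑ ^ a) + ∫⁻ x, ‖u x‖ₑ ^ b :=
      Ione_le_lintegral_add hΩ hu.continuous.measurable (by linarith) hq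
    _ ≤ C₁ * (∫⁻ x, ‖fderiv ℝ u x‖ₑ ^ a) + C₂ * ∫⁻ x, ‖fderiv ℝ u x‖ₑ ^ b :=
      add_le_add (hC₁ u hu hsupp) (hC₂ u hu hsupp)
    _ ≤ C₁ * Jone N Ω p₁ p₂ u + C₂ * Jone N Ω p₁ p₂ u := by
      gcongr
      exacts [hJ u hsu a le_rfl hab, hJ u hsu b hab le_rfl]
    _ ≤ (C₁ + C₂ + 1 : ℝ≥0) * Jone N Ω p₁ p₂ u := by
      rw [← add_mul]
      gcongr
      push_cast
      exact le_self_add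
  rw [ENNReal.coe_inv (by positivity), ENNReal.inv_mul_le_iff (by simp) (by simp)]
  exact hI

end VariableExponent

theorem stmt6_general (N : ℕ) (Ω : Set (EuclideanSpace ℝ (Fin N)))
    (hΩo : IsOpen Ω) (hΩb : Bornology.IsBounded Ω)
    (p₁ p₂ q : EuclideanSpace ℝ (Fin N) → ℝ)
    (qm qp : ℝ) (hqm : IsLeast (q '' closure Ω) qm)
    (hqp : IsGreatest (q '' closure Ω) qp)
    (hcond : ∀ x ∈ closure Ω, 1 < p₂ x ∧ p₂ x < qm ∧ qp < p₁ x ∧ p₁ x < N) :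
    ∃ c : ℝ, 0 < c ∧
      (∀ u : EuclideanSpace ℝ (Fin N) → ℝ,
        ContDiff ℝ 1 u → HasCompactSupport u → tsupport u ⊆ Ω →
        ENNReal.ofReal (c / 2) * Ione N Ω q u ≤ Jone N Ω p₁ p₂ u) ∧
      0 < sInf {r : ℝ≥0∞ | ∃ u : EuclideanSpace ℝ (Fin N) → ℝ,
        ContDiff ℝ 1 u ∧ HasCompactSupport u ∧ tsupport u ⊆ Ω ∧ u ≠ 0 ∧
        r = Jone N Ω p₁ p₂ u / Ione N Ω q u} := by
  obtain ⟨⟨x₀, hx₀, rfl⟩, hqm_le⟩ := hqm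
  obtain ⟨⟨x₁, hx₁, rfl⟩, hle_qp⟩ := hqp
  have hq : ∀ x ∈ Ω, q x₀ ≤ q x ∧ q x ≤ q x₁ := fun x hx =>
    ⟨hqm_le ⟨x, subset_closure hx, rfl⟩, hle_qp ⟨x, subset_closure hx, rfl⟩⟩
  have hp : ∀ x ∈ Ω, p₂ x ≤ q x₀ ∧ q x₁ ≤ p₁ x := fun x hx =>
    ⟨(hcond x (subset_closure hx)).2.1.le, (hcond x (subset_closure hx)).2.2.1.le⟩
  have h1 : 1 ≤ q x₀ := ((hcond x₀ hx₀).1.trans (hcond x₀ hx₀).2.1).le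
  have hmp : q x₀ ≤ q x₁ := hle_qp ⟨x₀, hx₀, rfl⟩
  have hpN : q x₁ < N := (hcond x₁ hx₁).2.2.1.trans (hcond x₁ hx₁).2.2.2
  obtain ⟨c, hc, hcI⟩ := exists_mul_Ione_le_Jone hΩo.measurableSet hΩb h1 hmp hpN hq hp
  refine ⟨2 * c, by positivity, fun u hu _ hsu => ?_, ?_⟩
  · simpa using hcI u hu hsu
  · refine (ENNReal.coe_pos.mpr hc).trans_le (le_sInf ?_)
    rintro _ ⟨u, hu, hcu, hsu, hu0, rfl⟩
    have hpos : 0 < q x₀ := by linarith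
    rw [ENNReal.le_div_iff_mul_le
      (.inl (Ione_ne_zero hΩo hu.continuous hsu hu0 hpos (hpos.trans_le hmp) hq))
      (.inl (Ione_ne_top hΩo.measurableSet hu.continuous hcu hpos hmp hq))]
    exact hcI u hu hsu

/-- If `Ω ⊆ ℝ^N` (`N ≥ 3`) is bounded open and `p₁, p₂, q` are continuous on
    `closure Ω` with `1 < p₂(x) < q⁻ ≤ q⁺ < p₁(x) < N`, then there is `μ > 0` with
    `J₁(u) ≥ (μ/2) I₁(u)` for all `C¹` functions `u` with compact support in `Ω`;
    in particular `λ₀ = inf J₁(u)/I₁(u) > 0`. -/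
theorem stmt6 (N : ℕ) (hN : 3 ≤ N) (Ω : Set (EuclideanSpace ℝ (Fin N)))
    (hΩo : IsOpen Ω) (hΩb : Bornology.IsBounded Ω)
    (p₁ p₂ q : EuclideanSpace ℝ (Fin N) → ℝ)
    (hp₁ : ContinuousOn p₁ (closure Ω)) (hp₂ : ContinuousOn p₂ (closure Ω))
    (hq : ContinuousOn q (closure Ω))
    (qm qp : ℝ) (hqm : IsLeast (q '' closure Ω) qm)
    (hqp : IsGreatest (q '' closure Ω) qp)
    (hcond : ∀ x ∈ closure Ω, 1 < p₂ x ∧ p₂ x < qm ∧ qp < p₁ x ∧ p₁ x < N) :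
    ∃ c : ℝ, 0 < c ∧
      (∀ u : EuclideanSpace ℝ (Fin N) → ℝ,
        ContDiff ℝ 1 u → HasCompactSupport u → tsupport u ⊆ Ω →
        ENNReal.ofReal (c / 2) * Ione N Ω q u ≤ Jone N Ω p₁ p₂ u) ∧
      0 < sInf {r : ℝ≥0∞ | ∃ u : EuclideanSpace ℝ (Fin N) → ℝ,
        ContDiff ℝ 1 u ∧ HasCompactSupport u ∧ tsupport u ⊆ Ω ∧ u ≠ 0 ∧
        r = Jone N Ω p₁ p₂ u / Ione N Ω q u} :=
  stmt6_general N Ω hΩo hΩb p₁ p₂ q qm qp hqm hqp hcond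
end

section
/- Let (X, μ) be a measure space and p : X → ℝ a measurable exponent function with 1 < p⁻ ≤ p(x) ≤ p⁺ < ∞ for μ-almost every x, where p⁻, p⁺ are real constants, and let p'(x) = p(x)/(p(x) − 1) be the pointwise conjugate exponent, with (p')⁻ := p⁺/(p⁺ − 1). Then for all measurable u, v : X → ℝ with |u|_{p(·)} and |v|_{p'(·)} finite, ∫_X |u(x) v(x)| dμ(x) ≤ (1/p⁻ + 1/(p')⁻) · |u|_{p(·)} · |v|_{p'(·)}. -/
open MeasureTheory ENNReal

/-- The modular `ρ_{p(·)}(u) = ∫_X |u(x)|^{p(x)} dμ(x)`. -/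
noncomputable def modular {X : Type*} [MeasurableSpace X] (μ : Measure X)
    (p : X → ℝ) (u : X → ℝ) : ℝ≥0∞ :=
  ∫⁻ x, ENNReal.ofReal (|u x| ^ p x) ∂μ

/-- The Luxemburg norm `|u|_{p(·)} = inf { λ > 0 : ρ_{p(·)}(u/λ) ≤ 1 }`,
    with `inf ∅ = ∞`, as a value in `[0,∞]`. -/
noncomputable def luxNorm {X : Type*} [MeasurableSpace X] (μ : Measure X)
    (p : X → ℝ) (u : X → ℝ) : ℝ≥0∞ :=
  sInf {l : ℝ≥0∞ | ∃ m : ℝ, 0 < m ∧ l = ENNReal.ofReal m ∧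
    modular μ p (fun x => u x / m) ≤ 1}

/-!
The right-hand side of Young's inequality `ab ≤ aᵗ/t + bᵗ'/t'` at the exponent `t = p(x)` is
bounded, uniformly in `x`, by `aᵗ/p⁻ + bᵗ'/(p')⁻`, since `1/t ≤ 1/p⁻` and
`1/t' = 1 - 1/t ≤ 1 - 1/p⁺ = 1/(p')⁻`.
Integrating gives `∫ |uv| ≤ ρ_p(u)/p⁻ + ρ_{p'}(v)/(p')⁻`; applied to `u/m` and `v/n` with
modulars at most `1` this is `∫ |uv| ≤ (1/p⁻ + 1/(p')⁻) m n`, and taking the infimum over all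
such `m` and `n` yields the Luxemburg norms.
-/

namespace Real

lemma one_div_conjExponent_le {t s : ℝ} (ht : 1 < t) (hts : t ≤ s) :
    1 / (t / (t - 1)) ≤ 1 / (s / (s - 1)) := by
  have hs : 1 < s := ht.trans_le hts
  have h_inv : 1 / s ≤ 1 / t := one_div_le_one_div_of_le (by linarith) hts
  calc 1 / (t / (t - 1)) = 1 - 1 / t := by field_simp
    _ ≤ 1 - 1 / s := by linarith
    _ = 1 / (s / (s - 1)) := by field_simp

lemma young_inequality_of_mem_Icc {a b t pm pp : ℝ} (ha : 0 ≤ a) (hb : 0 ≤ b) (hpm : 1 < pm)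
    (ht : t ∈ Set.Icc pm pp) :
    a * b ≤ 1 / pm * a ^ t + 1 / (pp / (pp - 1)) * b ^ (t / (t - 1)) := by
  have ht1 : 1 < t := hpm.trans_le ht.1
  calc a * b ≤ a ^ t / t + b ^ (t / (t - 1)) / (t / (t - 1)) :=
        young_inequality_of_nonneg ha hb (HolderConjugate.conjExponent ht1)
    _ = 1 / t * a ^ t + 1 / (t / (t - 1)) * b ^ (t / (t - 1)) := by ring
    _ ≤ 1 / pm * a ^ t + 1 / (pp / (pp - 1)) * b ^ (t / (t - 1)) := by
        gcongr ?_ * _ + ?_ * _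
        · exact one_div_le_one_div_of_le (by linarith) ht.1
        · exact one_div_conjExponent_le ht1 ht.2

end Real

section VariableExponent

variable {X : Type*} [MeasurableSpace X] {μ : Measure X} {p : X → ℝ} {pm pp : ℝ}

lemma lintegral_ofReal_abs_mul_le_modular (hp : Measurable p) (hpm : 1 < pm)
    (hb : ∀ᵐ x ∂μ, pm ≤ p x ∧ p x ≤ pp) {u : X → ℝ} (hu : Measurable u) (v : X → ℝ) :
    ∫⁻ x, ENNReal.ofReal |u x * v x| ∂μ ≤
      ENNReal.ofReal (1 / pm) * modular μ p u +
        ENNReal.ofReal (1 / (pp / (pp - 1))) * modular μ (fun x => p x / (p x - 1)) v := by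
  have h_pointwise : ∀ᵐ x ∂μ, ENNReal.ofReal |u x * v x| ≤
      ENNReal.ofReal (1 / pm) * ENNReal.ofReal (|u x| ^ p x) +
        ENNReal.ofReal (1 / (pp / (pp - 1))) * ENNReal.ofReal (|v x| ^ (p x / (p x - 1))) := by
    filter_upwards [hb] with x hx
    have hpp : 1 < pp := hpm.trans_le (hx.1.trans hx.2)
    rw [← ofReal_mul (by positivity), ← ofReal_mul (by positivity),
      ← ofReal_add (by positivity) (by positivity), abs_mul]
    exact ofReal_le_ofReal
      (Real.young_inequality_of_mem_Icc (abs_nonneg _) (abs_nonneg _) hpm hx)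
  have hu_meas : Measurable fun x => ENNReal.ofReal (1 / pm) * ENNReal.ofReal (|u x| ^ p x) :=
    (hu.abs.pow hp).ennreal_ofReal.const_mul _
  calc ∫⁻ x, ENNReal.ofReal |u x * v x| ∂μ
      ≤ ∫⁻ x, (ENNReal.ofReal (1 / pm) * ENNReal.ofReal (|u x| ^ p x) +
          ENNReal.ofReal (1 / (pp / (pp - 1))) *
            ENNReal.ofReal (|v x| ^ (p x / (p x - 1)))) ∂μ := lintegral_mono_ae h_pointwise
    _ = _ := by
        rw [lintegral_add_left hu_meas, lintegral_const_mul' _ _ ofReal_ne_top,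
          lintegral_const_mul' _ _ ofReal_ne_top]
        rfl

lemma lintegral_ofReal_abs_mul_le_of_modular_div_le_one (hp : Measurable p) (hpm : 1 < pm)
    (hle : pm ≤ pp) (hb : ∀ᵐ x ∂μ, pm ≤ p x ∧ p x ≤ pp) {u : X → ℝ} (hu : Measurable u)
    (v : X → ℝ) {m n : ℝ} (hm : 0 < m) (hn : 0 < n)
    (hum : modular μ p (fun x => u x / m) ≤ 1)
    (hvn : modular μ (fun x => p x / (p x - 1)) (fun x => v x / n) ≤ 1) :
    ∫⁻ x, ENNReal.ofReal |u x * v x| ∂μ ≤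
      ENNReal.ofReal (1 / pm + 1 / (pp / (pp - 1))) * ENNReal.ofReal m * ENNReal.ofReal n := by
  have hpp : 1 < pp := hpm.trans_le hle
  have h_scale : ∀ x, ENNReal.ofReal |u x * v x| =
      ENNReal.ofReal (m * n) * ENNReal.ofReal |u x / m * (v x / n)| := fun x => by
    rw [← ofReal_mul (by positivity), abs_mul, abs_mul, abs_div, abs_div, abs_of_pos hm,
      abs_of_pos hn]
    field_simp
  calc ∫⁻ x, ENNReal.ofReal |u x * v x| ∂μ
      = ENNReal.ofReal (m * n) * ∫⁻ x, ENNReal.ofReal |u x / m * (v x / n)| ∂μ := by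
        simp_rw [h_scale]
        exact lintegral_const_mul' _ _ ofReal_ne_top
    _ ≤ ENNReal.ofReal (m * n) * (ENNReal.ofReal (1 / pm) * 1 +
          ENNReal.ofReal (1 / (pp / (pp - 1))) * 1) := by
        gcongr
        exact (lintegral_ofReal_abs_mul_le_modular hp hpm hb (hu.div_const m) _).trans
          (by gcongr)
    _ = _ := by
        rw [mul_one, mul_one, ← ofReal_add (by positivity) (by positivity),
          ofReal_mul hm.le]
        ring

end VariableExponent

lemma luxNorm_eq_iInf {X : Type*} [MeasurableSpace X] (μ : Measure X) (p u : X → ℝ) :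
    luxNorm μ p u =
      ⨅ m : {m : ℝ // 0 < m ∧ modular μ p (fun x => u x / m) ≤ 1}, ENNReal.ofReal m := by
  rw [luxNorm, ← sInf_range]
  congr 1
  ext l
  constructor
  · rintro ⟨m, hm, rfl, hmod⟩
    exact ⟨⟨m, hm, hmod⟩, rfl⟩
  · rintro ⟨⟨m, hm, hmod⟩, rfl⟩
    exact ⟨m, hm, rfl, hmod⟩

lemma ENNReal.le_mul_iInf_mul_iInf {ι κ : Type*} {a c : ℝ≥0∞} {f : ι → ℝ≥0∞} {g : κ → ℝ≥0∞}
    (hc : c ≠ ∞) (hf : ⨅ i, f i ≠ ∞) (hg : ⨅ j, g j ≠ ∞) (h : ∀ i j, a ≤ c * f i * g j) :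
    a ≤ c * (⨅ i, f i) * ⨅ j, g j := by
  obtain ⟨i₀, hi₀⟩ := not_forall.mp (mt iInf_eq_top.mpr hf)
  have : Nonempty ι := ⟨i₀⟩
  rw [mul_iInf fun h => absurd h hc]
  exact le_iInf_mul_iInf ⟨i₀, mul_ne_top hc hi₀⟩ (not_forall.mp (mt iInf_eq_top.mpr hg)) h

theorem stmt13_general {X : Type*} [MeasurableSpace X] (μ : Measure X)
    (p : X → ℝ) (hp : Measurable p) (pm pp : ℝ) (hpm : 1 < pm) (hle : pm ≤ pp)
    (hb : ∀ᵐ x ∂μ, pm ≤ p x ∧ p x ≤ pp)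
    (u v : X → ℝ) (hu : Measurable u)
    (hufin : luxNorm μ p u ≠ ⊤)
    (hvfin : luxNorm μ (fun x => p x / (p x - 1)) v ≠ ⊤) :
    ∫⁻ x, ENNReal.ofReal |u x * v x| ∂μ ≤
      ENNReal.ofReal (1 / pm + 1 / (pp / (pp - 1))) * luxNorm μ p u *
        luxNorm μ (fun x => p x / (p x - 1)) v := by
  simp only [luxNorm_eq_iInf] at hufin hvfin ⊢
  exact ENNReal.le_mul_iInf_mul_iInf ofReal_ne_top hufin hvfin fun ⟨m, hm, hum⟩ ⟨n, hn, hvn⟩ =>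
    lintegral_ofReal_abs_mul_le_of_modular_div_le_one hp hpm hle hb hu v hm hn hum hvn

/-- Hölder-type inequality in variable exponent Lebesgue spaces: if
    `1 < p⁻ ≤ p(x) ≤ p⁺ < ∞` a.e., `p'(x) = p(x)/(p(x)−1)` and
    `(p')⁻ = p⁺/(p⁺−1)`, then for measurable `u, v` with finite norms,
    `∫ |uv| dμ ≤ (1/p⁻ + 1/(p')⁻) |u|_{p(·)} |v|_{p'(·)}`. -/
theorem stmt13 {X : Type*} [MeasurableSpace X] (μ : Measure X)
    (p : X → ℝ) (hp : Measurable p) (pm pp : ℝ) (hpm : 1 < pm) (hle : pm ≤ pp)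
    (hb : ∀ᵐ x ∂μ, pm ≤ p x ∧ p x ≤ pp)
    (u v : X → ℝ) (hu : Measurable u) (hv : Measurable v)
    (hufin : luxNorm μ p u ≠ ⊤)
    (hvfin : luxNorm μ (fun x => p x / (p x - 1)) v ≠ ⊤) :
    ∫⁻ x, ENNReal.ofReal |u x * v x| ∂μ ≤
      ENNReal.ofReal (1 / pm + 1 / (pp / (pp - 1))) * luxNorm μ p u *
        luxNorm μ (fun x => p x / (p x - 1)) v :=
  stmt13_general μ p hp pm pp hpm hle hb u v hu hufin hvfin
end
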